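/- Let (W,S) be a Coxeter system with length function ℓ, and let y, w ∈ W. Then the following are equivalent: (i) there exists a reduced expression w = σ₁σ₂⋯σ_ℓ (σᵢ ∈ S) admitting a subword σ_{i₁}σ_{i₂}⋯σ_{i_k} (with i₁ < i₂ < ⋯ < i_k) that is a reduced expression for y; (ii) every reduced expression of w admits such a subword that is a reduced expression for y. -/

import Mathlib

/-!
The strong exchange property comes from the reflection representation
`s ↦ ((t, ε) ↦ (s t s, ε + [t = s]))` of `W` on `W × ZMod 2`. It respects the braid relations
because the left inversion sequence of the braid word of length `2 m(s, s')` runs through the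
same `m(s, s')` reflections twice. Along a word for `w` the representation adds to `ε` the
number of occurrences of `t` in the left inversion sequence, so this parity depends on `w` only;
it is `1` for a left inversion `t` of `w`, hence `t` occurs in the left inversion sequence of
every word for `w`, and deleting the corresponding letter gives `t w`.

Let `≤` be the order generated by `t w ≤ w` for left inversions `t` of `w` (the Bruhat order).
By exchange, every `y ≤ w` is the product of a reduced subword of every word for `w`.
Conversely, `u ≤ w` implies `s u ≤ w` or `s u ≤ s w`, and by induction on a reduced word for
`w` this shows that the products of its subwords lie below `w`.
-/

namespace CoxeterSystem

open List

variable {B W : Type*} [Group W] {M : CoxeterMatrix B} (cs : CoxeterSystem M W)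

local prefix:100 "s" => cs.simple
local prefix:100 "π" => cs.wordProd
local prefix:100 "ℓ" => cs.length
local prefix:100 "lis" => cs.leftInvSeq

noncomputable section ReflectionRepresentation

open scoped Classical

theorem simple_mul_mul_simple_eq_simple_iff (i : B) (t : W) :
    s i * t * s i = s i ↔ t = s i := by
  constructor
  · intro h
    simpa [mul_assoc, simple_mul_simple_cancel_left] using congrArg (fun x => s i * x * s i) h
  · rintro rfl
    rw [simple_mul_simple_cancel_right]

def simplePerm (i : B) : Equiv.Perm (W × ZMod 2) :=
  Function.Involutive.toPerm (fun p => (s i * p.1 * s i, p.2 + if p.1 = s i then 1 else 0)) <| by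
    rintro ⟨t, ε⟩
    by_cases ht : t = s i
    · subst ht
      simp only [simple_mul_simple_cancel_right, ↓reduceIte, add_assoc, Prod.mk.injEq, true_and]
      rw [show (1 + 1 : ZMod 2) = 0 from rfl, add_zero]
    · dsimp only
      rw [if_neg ht, if_neg ((simple_mul_mul_simple_eq_simple_iff cs i t).not.mpr ht)]
      simp [mul_assoc, simple_mul_simple_cancel_left]

theorem simplePerm_apply (i : B) (t : W) (ε : ZMod 2) :
    simplePerm cs i (t, ε) = (s i * t * s i, ε + if t = s i then 1 else 0) :=
  rfl

def wordPerm (ω : List B) : Equiv.Perm (W × ZMod 2) := (ω.map (simplePerm cs)).prod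

theorem wordPerm_cons (i : B) (ω : List B) :
    wordPerm cs (i :: ω) = simplePerm cs i * wordPerm cs ω := by
  simp [wordPerm]

theorem wordPerm_apply (ω : List B) (t : W) (ε : ZMod 2) :
    wordPerm cs ω (t, ε) =
      (π ω * t * (π ω)⁻¹, ε + (lis ω).count (π ω * t * (π ω)⁻¹)) := by
  induction ω generalizing ε with
  | nil => simp [wordPerm]
  | cons i ω ih =>
    set u := π ω * t * (π ω)⁻¹
    have hconj : π (i :: ω) * t * (π (i :: ω))⁻¹ = s i * u * s i := by
      simp only [u, wordProd_cons, mul_inv_rev, inv_simple, mul_assoc]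
    have hu : s i * u * s i = MulAut.conj (s i) u := by simp [inv_simple]
    rw [wordPerm_cons, Equiv.Perm.mul_apply, ih, simplePerm_apply, hconj, leftInvSeq, count_cons,
      hu, count_map_of_injective _ _ (MulAut.conj (s i)).injective]
    simp only [MulAut.conj_apply, inv_simple, beq_iff_eq, eq_comm (a := s i),
      simple_mul_mul_simple_eq_simple_iff, Nat.cast_add, add_assoc]
    split_ifs <;> simp

theorem wordPerm_alternatingWord (i j : B) (m : ℕ) :
    wordPerm cs (alternatingWord i j (2 * m)) = (simplePerm cs i * simplePerm cs j) ^ m := by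
  induction m with
  | zero => simp [alternatingWord, wordPerm]
  | succ m ih =>
    rw [show 2 * (m + 1) = 2 * m + 1 + 1 by ring, alternatingWord_succ', alternatingWord_succ',
      if_neg (by simp), if_pos (by simp), wordPerm_cons, wordPerm_cons, ih,
      pow_succ', mul_assoc]

theorem leftInvSeq_alternatingWord (i j : B) (p : ℕ) :
    lis (alternatingWord i j (2 * p)) = (range (2 * p)).map (fun k => s i * (s j * s i) ^ k) := by
  refine ext_getElem (by simp) fun k hk _ => ?_
  rw [getElem_leftInvSeq_alternatingWord cs i j p k (by simpa using hk), getElem_map,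
    getElem_range, prod_alternatingWord_eq_mul_pow, if_neg (by simp)]
  congr 2
  omega

theorem count_leftInvSeq_braidWord_even (i j : B) (t : W) :
    Even ((lis (alternatingWord i j (2 * M i j))).count t) := by
  have hperiodic :
      (fun k => s i * (s j * s i) ^ k) ∘ (M i j + ·) = fun k => s i * (s j * s i) ^ k := by
    ext k
    simp [pow_add]
  rw [leftInvSeq_alternatingWord, two_mul, range_add, map_append, map_map, hperiodic,
    count_append]
  exact ⟨_, rfl⟩

theorem isLiftable_simplePerm : M.IsLiftable (simplePerm cs) := by
  intro i j
  ext ⟨t, ε⟩ : 1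
  have hprod : π (alternatingWord i j (2 * M i j)) = 1 := by
    rw [prod_alternatingWord_eq_mul_pow, if_pos (by simp), Nat.mul_div_cancel_left _ two_pos,
      one_mul, simple_mul_simple_pow]
  rw [← wordPerm_alternatingWord, wordPerm_apply, hprod]
  simp [ZMod.natCast_eq_zero_iff_even.mpr (count_leftInvSeq_braidWord_even cs i j t)]

def reflRep : W →* Equiv.Perm (W × ZMod 2) :=
  cs.lift ⟨simplePerm cs, isLiftable_simplePerm cs⟩

theorem reflRep_wordProd (ω : List B) : cs.reflRep (π ω) = wordPerm cs ω := by
  induction ω with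
  | nil => simp [wordPerm]
  | cons i ω ih => rw [wordProd_cons, map_mul, ih, wordPerm_cons, reflRep, lift_apply_simple]

/-- The parity of the number of occurrences of `t` in the left inversion sequence of any word
for `w` (see `leftInvParity_wordProd`). -/
def leftInvParity (w t : W) : ZMod 2 := (cs.reflRep w (w⁻¹ * t * w, 0)).2

theorem leftInvParity_wordProd (ω : List B) (t : W) :
    cs.leftInvParity (π ω) t = (lis ω).count t := by
  have h : π ω * ((π ω)⁻¹ * t * π ω) * (π ω)⁻¹ = t := by group
  rw [leftInvParity, reflRep_wordProd, wordPerm_apply, h, zero_add]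

theorem reflRep_apply (w x : W) (ε : ZMod 2) :
    cs.reflRep w (x, ε) = (w * x * w⁻¹, ε + cs.leftInvParity w (w * x * w⁻¹)) := by
  obtain ⟨ω, rfl⟩ := cs.wordProd_surjective w
  rw [reflRep_wordProd, wordPerm_apply, leftInvParity_wordProd]

theorem leftInvParity_mul (u v t : W) :
    cs.leftInvParity (u * v) t = cs.leftInvParity u t + cs.leftInvParity v (u⁻¹ * t * u) := by
  have h₁ : v * ((u * v)⁻¹ * t * (u * v)) * v⁻¹ = u⁻¹ * t * u := by group
  have h₂ : u * (u⁻¹ * t * u) * u⁻¹ = t := by group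
  rw [leftInvParity, map_mul, Equiv.Perm.mul_apply, reflRep_apply cs v, h₁, reflRep_apply cs u,
    h₂, zero_add, add_comm]

variable {cs} in
theorem IsReflection.leftInvParity_self {t : W} (ht : cs.IsReflection t) :
    cs.leftInvParity t t = 1 := by
  obtain ⟨v, i, rfl⟩ := ht
  have hv : cs.leftInvParity v (v * s i * v⁻¹) + cs.leftInvParity v⁻¹ (s i) = 0 := by
    simpa [leftInvParity, mul_assoc] using (cs.leftInvParity_mul v v⁻¹ (v * s i * v⁻¹)).symm
  have hs : cs.leftInvParity (s i) (s i) = 1 := by simpa using cs.leftInvParity_wordProd [i] (s i)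
  have hconj : (v * s i)⁻¹ * (v * s i * v⁻¹) * (v * s i) = s i := by
    simp [mul_assoc, inv_simple, simple_mul_simple_cancel_left]
  have hconj' : v⁻¹ * (v * s i * v⁻¹) * v = s i := by group
  rw [cs.leftInvParity_mul (v * s i), hconj, cs.leftInvParity_mul v, hconj', hs]
  linear_combination hv

variable {cs} in
theorem IsLeftInversion.leftInvParity_eq_one {w t : W} (h : cs.IsLeftInversion w t) :
    cs.leftInvParity w t = 1 := by
  obtain ⟨ht, hlt⟩ := h
  obtain ⟨β, hβ, hβw⟩ := cs.exists_isReduced (t * w)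
  have hnot : t ∉ lis β := fun hmem => by
    have := (cs.isLeftInversion_of_mem_leftInvSeq hβ hmem).2
    rw [← hβw, ← mul_assoc, ht.mul_self, one_mul] at this
    omega
  have hsplit := cs.leftInvParity_mul t (t * w) t
  rw [← mul_assoc, ht.mul_self, one_mul, inv_mul_cancel, one_mul] at hsplit
  rw [hsplit, ht.leftInvParity_self, hβw, leftInvParity_wordProd, count_eq_zero_of_not_mem hnot,
    Nat.cast_zero, add_zero]

end ReflectionRepresentation

variable {cs} in
theorem IsLeftInversion.mem_leftInvSeq {ω : List B} {t : W} (h : cs.IsLeftInversion (π ω) t) :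
    t ∈ lis ω := by
  classical
  rw [← count_pos_iff, Nat.pos_iff_ne_zero]
  intro hzero
  have hone := h.leftInvParity_eq_one
  rw [leftInvParity_wordProd, hzero, Nat.cast_zero] at hone
  exact zero_ne_one hone

variable {cs} in
theorem IsLeftInversion.exists_eraseIdx {ω : List B} {t : W} (h : cs.IsLeftInversion (π ω) t) :
    ∃ j < ω.length, π (ω.eraseIdx j) = t * π ω := by
  obtain ⟨j, hj, rfl⟩ := mem_iff_getElem.mp h.mem_leftInvSeq
  refine ⟨j, by simpa using hj, ?_⟩
  rw [← getD_eq_getElem _ 1 hj, getD_leftInvSeq_mul_wordProd]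

theorem exists_isReduced_sublist (ω : List B) :
    ∃ ω', ω' <+ ω ∧ cs.IsReduced ω' ∧ π ω' = π ω := by
  induction ω with
  | nil => exact ⟨[], Sublist.slnil, by simp [IsReduced], rfl⟩
  | cons i α ih =>
    obtain ⟨α', hsub, hred, hprod⟩ := ih
    rw [wordProd_cons, ← hprod]
    rcases cs.length_simple_mul (π α') i with hup | hdown
    · refine ⟨i :: α', hsub.cons_cons i, ?_, wordProd_cons _ _ _⟩
      rw [IsReduced, wordProd_cons, hup, hred, length_cons]
    · obtain ⟨j, hj, herase⟩ :=
        IsLeftInversion.exists_eraseIdx (ω := α') ⟨cs.isReflection_simple i, by omega⟩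
      refine ⟨α'.eraseIdx j, ((eraseIdx_sublist α' j).trans hsub).cons i, ?_, herase⟩
      have := length_eraseIdx_add_one hj
      rw [IsReduced, herase]
      have := hred.eq
      omega

def BruhatStep (u w : W) : Prop := ∃ t, cs.IsLeftInversion w t ∧ u = t * w

def BruhatLE : W → W → Prop := Relation.ReflTransGen cs.BruhatStep

variable {cs}

theorem IsReduced.bruhatStep_cons {i : B} {ω : List B} (hω : cs.IsReduced (i :: ω)) :
    cs.BruhatStep (π ω) (π (i :: ω)) := by
  refine ⟨s i, ⟨cs.isReflection_simple i, ?_⟩, ?_⟩ <;>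
    rw [wordProd_cons, simple_mul_simple_cancel_left]
  have := cs.length_wordProd_le ω
  rw [← wordProd_cons, hω.eq, length_cons]
  omega

/-- If the step does not lift, `s i` is a left descent of `w` but not of `t * w`; exchanging `t`
in a reduced word for `w` that starts with `i` then forces `s i * t * w = w`. -/
theorem BruhatStep.simple_mul_or {x w : W} (h : cs.BruhatStep x w) (i : B) :
    s i * x = w ∨ cs.BruhatStep (s i * x) (s i * w) := by
  obtain ⟨t, ⟨ht, hlt⟩, rfl⟩ := h
  have hconj : (s i * t * s i) * (s i * w) = s i * (t * w) := by
    simp [mul_assoc, simple_mul_simple_cancel_left]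
  have hr : cs.IsReflection (s i * t * s i) := by simpa [inv_simple] using ht.conj (s i)
  rcases lt_or_gt_of_ne (hr.length_mul_right_ne (s i * w)) with hdown | hup
  · exact Or.inr ⟨s i * t * s i, ⟨hr, hdown⟩, hconj.symm⟩
  · left
    rw [hconj] at hup
    obtain ⟨α, hα, hαw⟩ := cs.exists_isReduced (s i * w)
    have hw : π (i :: α) = w := by rw [wordProd_cons, ← hαw, simple_mul_simple_cancel_left]
    obtain ⟨j, hj, herase⟩ :=
      IsLeftInversion.exists_eraseIdx (ω := i :: α) ⟨ht, hw ▸ hlt⟩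
    rw [hw] at herase
    cases j with
    | zero => rw [← herase, eraseIdx_cons_zero, ← hαw, simple_mul_simple_cancel_left]
    | succ j =>
      exfalso
      rw [eraseIdx_cons_succ, wordProd_cons] at herase
      rw [← herase, simple_mul_simple_cancel_left] at hup
      have := cs.length_wordProd_le (α.eraseIdx j)
      have := length_eraseIdx_add_one (show j < α.length by simpa using hj)
      rw [hαw, hα.eq] at hup
      omega

theorem BruhatLE.simple_mul_or {u w : W} (h : cs.BruhatLE u w) (i : B) :
    cs.BruhatLE (s i * u) w ∨ cs.BruhatLE (s i * u) (s i * w) := by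
  induction h with
  | refl => exact Or.inr Relation.ReflTransGen.refl
  | tail _ hstep ih =>
    rcases ih with hle | hle
    · exact Or.inl (hle.tail hstep)
    · rcases hstep.simple_mul_or i with heq | hstep'
      · exact Or.inl (heq ▸ hle)
      · exact Or.inr (hle.tail hstep')

theorem bruhatLE_wordProd_of_sublist {ω' ω : List B} (h : ω' <+ ω) (hω : cs.IsReduced ω) :
    cs.BruhatLE (π ω') (π ω) := by
  induction h with
  | slnil => exact Relation.ReflTransGen.refl
  | cons i _ ih => exact (ih (hω.drop 1)).tail hω.bruhatStep_cons
  | cons_cons i _ ih =>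
    have hstep := hω.bruhatStep_cons
    rw [wordProd_cons, wordProd_cons]
    rcases (ih (hω.drop 1)).simple_mul_or i with hle | hle
    · exact hle.tail (wordProd_cons cs i _ ▸ hstep)
    · exact hle

theorem exists_isReduced_sublist_of_bruhatLE {y w : W} (h : cs.BruhatLE y w) (ω : List B)
    (hω : π ω = w) : ∃ ω', ω' <+ ω ∧ cs.IsReduced ω' ∧ π ω' = y := by
  induction h generalizing ω with
  | refl => exact hω ▸ cs.exists_isReduced_sublist ω
  | tail _ hstep ih =>
    obtain ⟨t, ht, rfl⟩ := hstep
    subst hω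
    obtain ⟨j, -, herase⟩ := ht.exists_eraseIdx
    obtain ⟨ω', hsub, hred, hprod⟩ := ih (ω.eraseIdx j) herase
    exact ⟨ω', hsub.trans (eraseIdx_sublist ω j), hred, hprod⟩

end CoxeterSystem

/-- Let `(W,S)` be a Coxeter system and `y, w ∈ W`.  Then some reduced expression
of `w` admits a subword which is a reduced expression for `y` if and only if every reduced
expression of `w` admits a subword which is a reduced expression for `y`. -/
theorem bruhat_subword_some_iff_all {B : Type*} {W : Type*} [Group W]
    {M : CoxeterMatrix B} (cs : CoxeterSystem M W) (y w : W) :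
    (∃ ω : List B, cs.IsReduced ω ∧ cs.wordProd ω = w ∧
      ∃ ω' : List B, ω'.Sublist ω ∧ cs.IsReduced ω' ∧ cs.wordProd ω' = y) ↔
    (∀ ω : List B, cs.IsReduced ω → cs.wordProd ω = w →
      ∃ ω' : List B, ω'.Sublist ω ∧ cs.IsReduced ω' ∧ cs.wordProd ω' = y) := by
  constructor
  · rintro ⟨ω₀, hω₀, rfl, ω', hsub, -, rfl⟩ ω - hω
    exact cs.exists_isReduced_sublist_of_bruhatLE
      (cs.bruhatLE_wordProd_of_sublist hsub hω₀) ω hω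
  · intro h
    obtain ⟨ω, hω, rfl⟩ := cs.exists_isReduced w
    exact ⟨ω, hω, rfl, h ω hω rfl⟩
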